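/- arXiv:1604.05866 — 11 statements merged into one kernel-verified Lean document; each statement's English description precedes it below -/
import Mathlib

section
/- A quasi-order Q is WQO if and only if the powerset P(Q), quasi-ordered by domination (X ≤ Y iff for all p ∈ X there exists q ∈ Y with p ≤ q), is well-founded (has no infinite strictly descending sequence). -/
/-- A quasi-order is WQO iff its powerset with domination is well-founded. -/
theorem stmt_6 (Q : Type*) [Preorder Q] :
    (∀ f : ℕ → Q, ∃ m n : ℕ, m < n ∧ f m ≤ f n) ↔
    ¬ ∃ X : ℕ → Set Q, ∀ n : ℕ,
      (∀ p ∈ X (n+1), ∃ q ∈ X n, p ≤ q) ∧ ¬ (∀ p ∈ X n, ∃ q ∈ X (n+1), p ≤ q) := by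
  constructor
  · intro hwqo
    rintro ⟨X, hX⟩
    have h : ∀ n, ∃ p ∈ X n, ∀ q ∈ X (n+1), ¬ p ≤ q := by
      intro n
      have := (hX n).2
      push_neg at this
      exact this
    choose p hp hq using h
    have dom : ∀ n k, ∀ x ∈ X (n+k), ∃ q ∈ X n, x ≤ q := by
      intro n k
      induction k with
      | zero => exact fun x hx => ⟨x, hx, le_refl x⟩
      | succ k ih =>
        intro x hx
        obtain ⟨q, hq1, hq2⟩ := (hX (n+k)).1 x hx
        obtain ⟨q', hq1', hq2'⟩ := ih q hq1
        exact ⟨q', hq1', hq2.trans hq2'⟩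
    obtain ⟨m, n, hmn, hle⟩ := hwqo p
    have : (m+1) + (n - (m+1)) = n := by omega
    have hx : p n ∈ X ((m+1) + (n - (m+1))) := by rw [this]; exact hp n
    obtain ⟨q, hq1, hq2⟩ := dom (m+1) (n - (m+1)) (p n) hx
    exact hq m q hq1 (hle.trans hq2)
  · intro h f
    by_contra hb
    push_neg at hb
    apply h
    refine ⟨fun n => {x | ∃ k, n ≤ k ∧ x = f k}, fun n => ⟨?_, ?_⟩⟩
    · rintro p ⟨k, hk, rfl⟩
      exact ⟨f k, ⟨k, by omega, rfl⟩, le_refl _⟩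
    · intro hc
      obtain ⟨q, ⟨k, hk, rfl⟩, hle⟩ := hc (f n) ⟨n, le_refl n, rfl⟩
      exact hb n k (by omega) hle
end

section
/- A quasi-order Q is WQO if and only if the set of downward-closed subsets of Q, partially ordered by inclusion, is well-founded. -/
/-- A quasi-order is WQO iff its downsets are well-founded under inclusion. -/
theorem stmt_7 (Q : Type*) [Preorder Q] :
    (∀ f : ℕ → Q, ∃ m n : ℕ, m < n ∧ f m ≤ f n) ↔
    ¬ ∃ D : ℕ → Set Q,
      (∀ n, ∀ q ∈ D n, ∀ p, p ≤ q → p ∈ D n) ∧ (∀ n, D (n+1) ⊂ D n) := by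
  constructor
  · rintro hwqo ⟨D, hdown, hstrict⟩
    have hmono : ∀ m n : ℕ, m ≤ n → D n ⊆ D m := by
      intro m n hmn
      induction n with
      | zero => simp_all
      | succ k ih =>
        rcases Nat.lt_or_ge m (k+1) with h | h
        · exact ((hstrict k).1).trans (ih (Nat.lt_succ_iff.mp h))
        · have : m = k + 1 := le_antisymm hmn h
          subst this; rfl
    choose q hq1 hq2 using fun n => Set.exists_of_ssubset (hstrict n)
    obtain ⟨m, n, hmn, hle⟩ := hwqo q
    have hn : q n ∈ D (m+1) := hmono (m+1) n hmn (hq1 n)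
    exact hq2 m (hdown (m+1) (q n) hn (q m) hle)
  · intro h f
    by_contra hbad
    push_neg at hbad
    apply h
    refine ⟨fun n => {p | ∃ k, n ≤ k ∧ p ≤ f k}, ?_, ?_⟩
    · rintro n q ⟨k, hk, hqk⟩ p hpq
      exact ⟨k, hk, hpq.trans hqk⟩
    · intro n
      constructor
      · rintro p ⟨k, hk, hpk⟩
        exact ⟨k, Nat.le_of_succ_le hk, hpk⟩
      · intro hsub
        have : f n ∈ {p | ∃ k, n ≤ k ∧ p ≤ f k} := ⟨n, le_refl n, le_refl _⟩
        obtain ⟨k, hk, hle⟩ := hsub this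
        exact hbad n k hk hle
end

section
/- A quasi-order Q is WQO if and only if for every sequence f : ℕ → Q there exists n ∈ ℕ such that the restriction of f to {k : k > n} is regular, i.e. for every m > n the set {k : k > m and f(m) ≤ f(k)} is infinite. -/
/-- WQO iff every sequence is regular from some point on. -/
theorem stmt_8 (Q : Type*) [Preorder Q] :
    (∀ f : ℕ → Q, ∃ m n : ℕ, m < n ∧ f m ≤ f n) ↔
    (∀ f : ℕ → Q, ∃ n : ℕ, ∀ m, n < m → {k : ℕ | m < k ∧ f m ≤ f k}.Infinite) := by
  constructor
  · intro hwqo f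
    by_contra hcon
    push_neg at hcon
    have hcon' : ∀ n : ℕ, ∃ m, n < m ∧ ∃ b, ∀ k, m < k → f m ≤ f k → k ≤ b := by
      intro n
      obtain ⟨m, hm, hfin⟩ := hcon n
      obtain ⟨b, hb⟩ := hfin.bddAbove
      exact ⟨m, hm, b, fun k h1 h2 => hb ⟨h1, h2⟩⟩
    choose next hlt bound hbound using hcon'
    -- inductively chosen base points
    let s : ℕ → ℕ := fun i => Nat.rec 0
      (fun _ prev => max prev (max (next prev) (bound prev))) i
    have hs_succ : ∀ i, s (i + 1) = max (s i) (max (next (s i)) (bound (s i))) :=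
      fun i => rfl
    have hs_mono : Monotone s := by
      apply monotone_nat_of_le_succ
      intro i
      rw [hs_succ]
      exact le_max_left _ _
    set p : ℕ → ℕ := fun i => next (s i) with hp
    have key : ∀ i j, i < j → p i < p j ∧ bound (s i) < p j := by
      intro i j hij
      have h1 : s (i + 1) ≤ s j := hs_mono hij
      have h2 : next (s i) ≤ s j := by
        refine le_trans ?_ h1
        rw [hs_succ]
        exact le_trans (le_max_left _ _) (le_max_right _ _)
      have h3 : bound (s i) ≤ s j := by
        refine le_trans ?_ h1
        rw [hs_succ]
        exact le_trans (le_max_right _ _) (le_max_right _ _)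
      have h4 : s j < next (s j) := hlt _
      exact ⟨lt_of_le_of_lt h2 h4, lt_of_le_of_lt h3 h4⟩
    obtain ⟨i, j, hij, hle⟩ := hwqo (fun i => f (p i))
    obtain ⟨hlt', hbd⟩ := key i j hij
    exact absurd (hbound (s i) (p j) hlt' hle) (not_le.mpr hbd)
  · intro h f
    obtain ⟨n, hn⟩ := h f
    obtain ⟨k, hk1, hk2⟩ := (hn (n + 1) (Nat.lt_succ_self n)).nonempty
    exact ⟨n + 1, k, hk1, hk2⟩
end

section
/- (Rado's trick) Let Q be a WQO and (D_n) a sequence of downward-closed subsets of Q. Then there exists an infinite set N ⊆ ℕ such that ⋃_{i ∈ N} ⋂_{j ∈ N, j > i} D_j = ⋃_{n ∈ N} D_n. -/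
/-- Rado's trick: in a WQO, every sequence of downsets has a subsequence whose
liminf equals its union. -/
theorem stmt_10 (Q : Type*) [Preorder Q]
    (hwqo : ∀ f : ℕ → Q, ∃ m n : ℕ, m < n ∧ f m ≤ f n)
    (D : ℕ → Set Q) (hD : ∀ n, ∀ q ∈ D n, ∀ p, p ≤ q → p ∈ D n) :
    ∃ N : Set ℕ, N.Infinite ∧
      (⋃ i ∈ N, ⋂ j ∈ N, ⋂ _ : i < j, D j) = ⋃ n ∈ N, D n := by
  by_contra hcon
  push_neg at hcon
  -- From failure for every infinite N, extract a witness for descending recursion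
  have key : ∀ N : Set ℕ, N.Infinite →
      ∃ n, n ∈ N ∧ ∃ q, q ∈ D n ∧
        {j | j ∈ N ∧ n < j ∧ q ∉ D j}.Infinite := by
    intro N hN
    have hne := hcon N hN
    have hsub : (⋃ i ∈ N, ⋂ j ∈ N, ⋂ _ : i < j, D j) ⊆ ⋃ n ∈ N, D n := by
      intro q hq
      simp only [Set.mem_iUnion, Set.mem_iInter] at hq ⊢
      obtain ⟨i, hi, hq⟩ := hq
      obtain ⟨j, hj, hij⟩ := hN.exists_gt i
      exact ⟨j, hj, hq j hj hij⟩
    have : ¬ (⋃ n ∈ N, D n) ⊆ (⋃ i ∈ N, ⋂ j ∈ N, ⋂ _ : i < j, D j) := by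
      intro h
      exact hne (le_antisymm hsub h)
    obtain ⟨q, hq1, hq2⟩ := Set.not_subset.mp this
    simp only [Set.mem_iUnion, Set.mem_iInter, not_exists, not_forall] at hq1 hq2
    obtain ⟨n, hn, hqn⟩ := hq1
    refine ⟨n, hn, q, hqn, ?_⟩
    apply Set.infinite_of_not_bddAbove
    rw [not_bddAbove_iff]
    intro b
    obtain ⟨i, hi, hbi⟩ := hN.exists_gt (max b n)
    obtain ⟨j, hj, hij, hqj⟩ := hq2 i hi
    exact ⟨j, ⟨hj, lt_trans (lt_of_le_of_lt (le_max_right b n) hbi) hij,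
      hqj⟩, lt_trans (lt_of_le_of_lt (le_max_left b n) hbi) hij⟩
  choose nf hnf qf hqf hinf using key
  let F : ℕ → {N : Set ℕ // N.Infinite} := fun k =>
    Nat.rec ⟨Set.univ, Set.infinite_univ⟩
      (fun _ p => ⟨{j | j ∈ p.1 ∧ nf p.1 p.2 < j ∧ qf p.1 p.2 ∉ D j},
        hinf p.1 p.2⟩) k
  have hstep : ∀ k, (F (k + 1)).1 =
      {j | j ∈ (F k).1 ∧ nf (F k).1 (F k).2 < j ∧ qf (F k).1 (F k).2 ∉ D j} :=
    fun k => rfl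
  have hmono : ∀ k l, k ≤ l → (F l).1 ⊆ (F k).1 := by
    intro k l hkl
    induction l with
    | zero => simp_all
    | succ m ih =>
      rcases Nat.lt_or_ge k (m + 1) with h | h
      · intro j hj
        rw [hstep m] at hj
        exact ih (Nat.lt_succ_iff.mp h) hj.1
      · have : k = m + 1 := le_antisymm hkl h
        subst this
        exact fun _ h => h
  obtain ⟨k, l, hkl, hle⟩ := hwqo (fun k => qf (F k).1 (F k).2)
  have hnl : nf (F l).1 (F l).2 ∈ (F l).1 := hnf _ _
  have hnl' : nf (F l).1 (F l).2 ∈ (F (k + 1)).1 := hmono _ _ hkl hnl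
  rw [hstep k] at hnl'
  exact hnl'.2.2 (hD _ _ (hqf (F l).1 (F l).2) _ hle)
end

section
/- Rado's partial order R, defined on pairs {m,n} of natural numbers with m < n by {m,n} ≤ {m',n'} iff (m = m' and n ≤ n') or n < m', is a well-quasi-order. -/
/-- Rado's partial order on pairs of naturals. -/
def radoLe (x y : {p : ℕ × ℕ // p.1 < p.2}) : Prop :=
  (x.1.1 = y.1.1 ∧ x.1.2 ≤ y.1.2) ∨ x.1.2 < y.1.1

/-- Rado's partial order is a well-quasi-order. -/
theorem stmt_12 :
    ∀ f : ℕ → {p : ℕ × ℕ // p.1 < p.2}, ∃ i j : ℕ, i < j ∧ radoLe (f i) (f j) := by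
  intro f
  by_cases h : ∃ j, 0 < j ∧ (f 0).1.2 < (f j).1.1
  · obtain ⟨j, hj, hlt⟩ := h
    exact ⟨0, j, hj, Or.inr hlt⟩
  · push_neg at h
    set N := (f 0).1.2 with hN
    have hb : ∀ j : ℕ, (f (j + 1)).1.1 < N + 1 := fun j =>
      Nat.lt_succ_of_le (h (j + 1) (Nat.succ_pos j))
    let g : ℕ → Fin (N + 1) := fun j => ⟨(f (j + 1)).1.1, hb j⟩
    obtain ⟨m, hm⟩ := Finite.exists_infinite_fiber g
    have hS : (g ⁻¹' {m}).Infinite := Set.infinite_coe_iff.mp hm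
    -- pick i in the fiber with minimal second coordinate
    have hne : (g ⁻¹' {m}).Nonempty := hS.nonempty
    obtain ⟨i0, hi0⟩ := hne
    classical
    let P : ℕ → Prop := fun n => ∃ j, j ∈ g ⁻¹' {m} ∧ (f (j + 1)).1.2 = n
    have hP : ∃ n, P n := ⟨(f (i0 + 1)).1.2, i0, hi0, rfl⟩
    obtain ⟨i, hiS, hival⟩ := Nat.find_spec hP
    obtain ⟨j, hjS, hij⟩ := hS.exists_gt i
    refine ⟨i + 1, j + 1, by omega, Or.inl ⟨?_, ?_⟩⟩
    · have h1 : g i = m := hiS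
      have h2 : g j = m := hjS
      have := congrArg Fin.val (h1.trans h2.symm)
      simpa [g] using this
    · rw [hival]
      exact Nat.find_min' hP ⟨j, hjS, rfl⟩
end

section
/- In Rado's partial order R, the sequence of downsets D_n = ↓{{n,l} : n < l} is an infinite antichain under inclusion: for m < n, D_m ⊄ D_n and D_n ⊄ D_m. In particular the downsets of R are not well-quasi-ordered by inclusion. -/
lemma radoLe_trans {x y z : {p : ℕ × ℕ // p.1 < p.2}} (h1 : radoLe x y) (h2 : radoLe y z) :
    radoLe x z := by
  have hy := y.2
  unfold radoLe at *
  rcases h1 with ⟨a, b⟩ | c <;> rcases h2 with ⟨d, e⟩ | f <;> [left; right; right; right] <;> omega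

/-- The downsets `D n = ↓{{n,l} : n < l}` form an infinite antichain under
inclusion; in particular the downsets of Rado's poset are not WQO under inclusion. -/
theorem stmt_13
    (D : ℕ → Set {p : ℕ × ℕ // p.1 < p.2})
    (hD : ∀ n, D n = {x | ∃ y : {p : ℕ × ℕ // p.1 < p.2}, y.1.1 = n ∧ radoLe x y}) :
    (∀ m n : ℕ, m < n → ¬ D m ⊆ D n ∧ ¬ D n ⊆ D m) ∧
    ¬ (∀ E : ℕ → Set {p : ℕ × ℕ // p.1 < p.2},
        (∀ n, ∀ q ∈ E n, ∀ p, radoLe p q → p ∈ E n) →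
        ∃ m n : ℕ, m < n ∧ E m ⊆ E n) := by
  have anti : ∀ m n : ℕ, m < n → ¬ D m ⊆ D n ∧ ¬ D n ⊆ D m := by
    intro m n hmn
    constructor
    · intro h
      have hm : (⟨(m, n + 1), by omega⟩ : {p : ℕ × ℕ // p.1 < p.2}) ∈ D m := by
        rw [hD]
        exact ⟨⟨(m, n + 1), by omega⟩, rfl, Or.inl ⟨rfl, le_refl _⟩⟩
      have h2 := h hm
      rw [hD] at h2
      obtain ⟨y, hy1, hy2⟩ := h2
      rcases hy2 with ⟨h3, _⟩ | h3 <;> simp_all <;> omega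
    · intro h
      have hn : (⟨(n, n + 1), by omega⟩ : {p : ℕ × ℕ // p.1 < p.2}) ∈ D n := by
        rw [hD]
        exact ⟨⟨(n, n + 1), by omega⟩, rfl, Or.inl ⟨rfl, le_refl _⟩⟩
      have h2 := h hn
      rw [hD] at h2
      obtain ⟨y, hy1, hy2⟩ := h2
      rcases hy2 with ⟨h3, _⟩ | h3 <;> simp_all <;> omega
  refine ⟨anti, ?_⟩
  intro hall
  have hdc : ∀ n, ∀ q ∈ D n, ∀ p, radoLe p q → p ∈ D n := by
    intro n q hq p hpq
    rw [hD] at hq ⊢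
    obtain ⟨y, hy, hle⟩ := hq
    exact ⟨y, hy, radoLe_trans hpq hle⟩
  obtain ⟨m, n, hmn, hsub⟩ := hall D hdc
  exact (anti m n hmn).1 hsub
end

section
/- For a quasi-order Q, the powerset P(Q) with the domination quasi-order is WQO if and only if there is no bad sequence of sequences into Q, i.e. no map f : [ℕ]² → Q such that for all m < n < l, ¬(f({m,n}) ≤ f({n,l})). -/
/-- The powerset of `Q` with domination is WQO iff there is no bad sequence of
sequences into `Q`. -/
theorem stmt_14 (Q : Type*) [Preorder Q] :
    (∀ X : ℕ → Set Q, ∃ m n : ℕ, m < n ∧ ∀ p ∈ X m, ∃ q ∈ X n, p ≤ q) ↔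
    ¬ ∃ f : ℕ → ℕ → Q, ∀ m n l : ℕ, m < n → n < l → ¬ f m n ≤ f n l := by
  constructor
  · rintro h ⟨f, hf⟩
    obtain ⟨m, n, hmn, hdom⟩ := h (fun n => {q | ∃ l, n < l ∧ q = f n l})
    obtain ⟨q, ⟨l, hnl, rfl⟩, hle⟩ := hdom (f m n) ⟨n, hmn, rfl⟩
    exact hf m n l hmn hnl hle
  · intro h X
    by_contra hbad
    push_neg at hbad
    have hb : ∀ m n, m < n → ∃ p, p ∈ X m ∧ ∀ q ∈ X n, ¬ p ≤ q := by
      intro m n hmn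
      obtain ⟨p, hp, hq⟩ := hbad m n hmn
      exact ⟨p, hp, hq⟩
    obtain ⟨p0, _, _⟩ := hb 0 1 one_pos
    apply h
    refine ⟨fun m n => if h' : m < n then (hb m n h').choose else p0, ?_⟩
    intro m n l hmn hnl
    simp only [dif_pos hmn, dif_pos hnl]
    have h1 := (hb m n hmn).choose_spec
    have h2 := (hb n l hnl).choose_spec
    exact h1.2 _ h2.1
end

section
/- (Laver) If Q is a WQO but the powerset P(Q) with the domination order is not WQO, then Rado's partial order R embeds into Q, i.e. there is a map e : R → Q with x ≤ y in R iff e(x) ≤ e(y) in Q. -/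
lemma ramseyList {C : Type} [Finite C] :
    ∀ (r : ℕ) (c : List ℕ → C) (S : Set ℕ), S.Infinite →
    ∃ H : Set ℕ, H ⊆ S ∧ H.Infinite ∧ ∃ k : C, ∀ l : List ℕ,
      l.length = r → l.Pairwise (· < ·) → (∀ x ∈ l, x ∈ H) → c l = k := by
  intro r
  induction r with
  | zero =>
    intro c S hS
    refine ⟨S, subset_rfl, hS, c [], ?_⟩
    intro l hl _ _
    rw [List.length_eq_zero_iff.mp hl]
  | succ r ih =>
    intro c S hS
    have step : ∀ T : Set ℕ, T.Infinite → ∃ x, x ∈ T ∧ ∃ T' : Set ℕ,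
        T' ⊆ T ∧ T'.Infinite ∧ (∀ y ∈ T', x < y) ∧ ∃ k : C, ∀ l : List ℕ,
        l.length = r → l.Pairwise (· < ·) → (∀ z ∈ l, z ∈ T') → c (x :: l) = k := by
      intro T hT
      obtain ⟨x, hx⟩ := hT.nonempty
      have hT' : (T \ Set.Iic x).Infinite := hT.diff (Set.finite_Iic x)
      obtain ⟨H', hH'sub, hH'inf, k, hk⟩ := ih (fun l => c (x :: l)) _ hT'
      exact ⟨x, hx, H', fun y hy => (hH'sub hy).1, hH'inf,
        fun y hy => not_le.mp fun h => (hH'sub hy).2 h, k, hk⟩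
    choose xf hxf Tf hTfsub hTfinf hTfgt kf hkf using step
    let F : ℕ → {T : Set ℕ // T.Infinite} := fun n =>
      Nat.rec ⟨S, hS⟩ (fun _ p => ⟨Tf p.1 p.2, hTfinf p.1 p.2⟩) n
    let X : ℕ → ℕ := fun n => xf (F n).1 (F n).2
    let K : ℕ → C := fun n => kf (F n).1 (F n).2
    have hstep : ∀ n, (F (n + 1)).1 = Tf (F n).1 (F n).2 := fun n => rfl
    have hsub : ∀ n, (F (n + 1)).1 ⊆ (F n).1 := fun n => hTfsub _ _
    have hmono : ∀ i j, i ≤ j → (F j).1 ⊆ (F i).1 := by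
      intro i j hij
      induction j with
      | zero => rw [Nat.le_zero.mp hij]
      | succ j ihj =>
        rcases Nat.lt_or_ge i (j + 1) with h | h
        · exact (ihj (Nat.lt_succ_iff.mp h)).trans' (hsub j) |>.trans subset_rfl
        · rw [Nat.le_antisymm hij h]
    have hXmem : ∀ n, X n ∈ (F n).1 := fun n => hxf _ _
    have hXlt : ∀ n, ∀ y ∈ (F (n + 1)).1, X n < y := fun n => hTfgt _ _
    have hXmono : StrictMono X :=
      strictMono_nat_of_lt_succ fun n => hXlt n _ (hXmem (n + 1))
    obtain ⟨k0, hk0⟩ := Finite.exists_infinite_fiber K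
    have hk0' : (K ⁻¹' {k0}).Infinite := Set.infinite_coe_iff.mp hk0
    refine ⟨X '' (K ⁻¹' {k0}), ?_, hk0'.image (hXmono.injective.injOn), k0, ?_⟩
    · rintro _ ⟨n, _, rfl⟩
      exact hmono 0 n (Nat.zero_le n) (hXmem n)
    · intro l hlen hpw hmem
      match l with
      | z :: l' =>
        obtain ⟨n, hn, rfl⟩ := hmem z List.mem_cons_self
        have hl' : ∀ w ∈ l', w ∈ (F (n + 1)).1 := by
          intro w hw
          obtain ⟨m, _, rfl⟩ := hmem w (List.mem_cons_of_mem _ hw)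
          have : X n < X m := (List.pairwise_cons.mp hpw).1 _ hw
          have hnm : n < m := hXmono.lt_iff_lt.mp this
          exact hmono (n + 1) m hnm (hXmem m)
        have := hkf (F n).1 (F n).2 l' (by simpa using hlen)
          (List.pairwise_cons.mp hpw).2 hl'
        rw [this]
        exact hn

/-- Laver: if `Q` is WQO but its powerset with domination is not WQO, then
Rado's poset embeds into `Q`. -/
theorem stmt_15 (Q : Type*) [Preorder Q]
    (hwqo : ∀ f : ℕ → Q, ∃ m n : ℕ, m < n ∧ f m ≤ f n)
    (hpow : ¬ ∀ X : ℕ → Set Q, ∃ m n : ℕ, m < n ∧ ∀ p ∈ X m, ∃ q ∈ X n, p ≤ q) :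
    ∃ e : {p : ℕ × ℕ // p.1 < p.2} → Q, ∀ x y, radoLe x y ↔ e x ≤ e y := by
  classical
  push_neg at hpow
  obtain ⟨X, hX⟩ := hpow
  choose a ha1 ha2 using hX
  set A : ℕ → ℕ → Q := fun m n => if h : m < n then a m n h else a 0 1 one_pos with hA
  have hG : ∀ m n p : ℕ, m < n → n < p → ¬ A m n ≤ A n p := by
    intro m n p h1 h2
    simp only [hA, dif_pos h1, dif_pos h2]
    exact ha2 m n h1 _ (ha1 n p h2)
  -- colorings
  set c1 : List ℕ → Bool := fun l => match l with
    | [x, y, z, w] => decide (A x y ≤ A z w) | _ => true with hc1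
  set c2 : List ℕ → Bool := fun l => match l with
    | [x, y, z, w] => decide (A x z ≤ A y w) | _ => true with hc2
  set c4 : List ℕ → Bool := fun l => match l with
    | [x, y, z, w] => decide (A y z ≤ A x w) | _ => true with hc4
  set cT : List ℕ → Bool := fun l => match l with
    | [x, y, z] => decide (A x y ≤ A x z) | _ => true with hcT
  obtain ⟨H1, hH1S, hH1inf, k1, hom1⟩ := ramseyList 4 c1 Set.univ Set.infinite_univ
  obtain ⟨H2, hH21, hH2inf, k2, hom2⟩ := ramseyList 4 c2 H1 hH1inf
  obtain ⟨H3, hH32, hH3inf, k4, hom4⟩ := ramseyList 4 c4 H2 hH2inf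
  obtain ⟨H4, hH43, hH4inf, kT, homT⟩ := ramseyList 3 cT H3 hH3inf
  set h : ℕ → ℕ := Nat.nth (· ∈ H4) with hh
  have hmono : StrictMono h := Nat.nth_strictMono hH4inf
  have hm4 : ∀ n, h n ∈ H4 := fun n => Nat.nth_mem_of_infinite hH4inf n
  have hm3 : ∀ n, h n ∈ H3 := fun n => hH43 (hm4 n)
  have hm2 : ∀ n, h n ∈ H2 := fun n => hH32 (hm3 n)
  have hm1 : ∀ n, h n ∈ H1 := fun n => hH21 (hm2 n)
  set B : ℕ → ℕ → Q := fun i j => A (h i) (h j) with hB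
  have pw4 : ∀ {x y z w : ℕ}, x < y → y < z → z < w →
      ([x, y, z, w] : List ℕ).Pairwise (· < ·) := by
    intro x y z w h1 h2 h3
    refine List.Pairwise.cons ?_ (List.Pairwise.cons ?_
      (List.Pairwise.cons ?_ (List.pairwise_singleton _ _))) <;>
      intro t ht <;> simp at ht <;> omega
  have pw3 : ∀ {x y z : ℕ}, x < y → y < z →
      ([x, y, z] : List ℕ).Pairwise (· < ·) := by
    intro x y z h1 h2
    refine List.Pairwise.cons ?_ (List.Pairwise.cons ?_ (List.pairwise_singleton _ _))
    · intro t ht; simp at ht; omega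
    · intro t ht; simp at ht; omega
  have mem4 : ∀ (S : Set ℕ), (∀ n, h n ∈ S) → ∀ (i j k l : ℕ),
      ∀ x ∈ [h i, h j, h k, h l], x ∈ S := by
    intro S hS i j k l x hx
    simp only [List.mem_cons, List.not_mem_nil, or_false] at hx
    rcases hx with rfl | rfl | rfl | rfl <;> exact hS _
  have mem3 : ∀ (S : Set ℕ), (∀ n, h n ∈ S) → ∀ (i j k : ℕ),
      ∀ x ∈ [h i, h j, h k], x ∈ S := by
    intro S hS i j k x hx
    simp only [List.mem_cons, List.not_mem_nil, or_false] at hx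
    rcases hx with rfl | rfl | rfl <;> exact hS _
  -- determine colors
  have hk1 : k1 = true := by
    by_contra hne
    rw [Bool.not_eq_true] at hne
    obtain ⟨i, j, hij, hle⟩ := hwqo (fun i => B (2*i) (2*i+1))
    have h1 : h (2*i) < h (2*i+1) := hmono (by omega)
    have h2 : h (2*i+1) < h (2*j) := hmono (by omega)
    have h3 : h (2*j) < h (2*j+1) := hmono (by omega)
    have := hom1 [h (2*i), h (2*i+1), h (2*j), h (2*j+1)] rfl (pw4 h1 h2 h3)
      (mem4 H1 hm1 _ _ _ _)
    rw [hne] at this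
    exact absurd hle (of_decide_eq_false this)
  have L_P1 : ∀ {x y z w : ℕ}, x < y → y < z → z < w → B x y ≤ B z w := by
    intro x y z w h1 h2 h3
    have := hom1 [h x, h y, h z, h w] rfl (pw4 (hmono h1) (hmono h2) (hmono h3))
      (mem4 H1 hm1 _ _ _ _)
    rw [hk1] at this
    exact of_decide_eq_true this
  have hk2 : k2 = false := by
    by_contra hne
    rw [Bool.not_eq_false] at hne
    have e1 := hom2 [h 0, h 1, h 2, h 3] rfl
      (pw4 (hmono (by omega)) (hmono (by omega)) (hmono (by omega))) (mem4 H2 hm2 _ _ _ _)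
    have e2 := hom2 [h 1, h 2, h 3, h 4] rfl
      (pw4 (hmono (by omega)) (hmono (by omega)) (hmono (by omega))) (mem4 H2 hm2 _ _ _ _)
    rw [hne] at e1 e2
    exact hG (h 0) (h 2) (h 4) (hmono (by omega)) (hmono (by omega))
      ((of_decide_eq_true e1).trans (of_decide_eq_true e2))
  have L_P2 : ∀ {x y z w : ℕ}, x < y → y < z → z < w → ¬ B x z ≤ B y w := by
    intro x y z w h1 h2 h3
    have := hom2 [h x, h y, h z, h w] rfl (pw4 (hmono h1) (hmono h2) (hmono h3))
      (mem4 H2 hm2 _ _ _ _)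
    rw [hk2] at this
    exact of_decide_eq_false this
  have hk4 : k4 = false := by
    by_contra hne
    rw [Bool.not_eq_false] at hne
    have e1 : B 0 1 ≤ B 2 3 := L_P1 (by omega) (by omega) (by omega)
    have e2 := hom4 [h 1, h 2, h 3, h 4] rfl
      (pw4 (hmono (by omega)) (hmono (by omega)) (hmono (by omega))) (mem4 H3 hm3 _ _ _ _)
    rw [hne] at e2
    exact hG (h 0) (h 1) (h 4) (hmono (by omega)) (hmono (by omega))
      (e1.trans (of_decide_eq_true e2))
  have L_P4 : ∀ {x y z w : ℕ}, x < y → y < z → z < w → ¬ B y z ≤ B x w := by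
    intro x y z w h1 h2 h3
    have := hom4 [h x, h y, h z, h w] rfl (pw4 (hmono h1) (hmono h2) (hmono h3))
      (mem4 H3 hm3 _ _ _ _)
    rw [hk4] at this
    exact of_decide_eq_false this
  have hkT : kT = true := by
    by_contra hne
    rw [Bool.not_eq_true] at hne
    obtain ⟨i, j, hij, hle⟩ := hwqo (fun i => B 0 (i+1))
    have := homT [h 0, h (i+1), h (j+1)] rfl
      (pw3 (hmono (by omega)) (hmono (by omega))) (mem3 H4 hm4 _ _ _)
    rw [hne] at this
    exact absurd hle (of_decide_eq_false this)
  have L_T1 : ∀ {x y z : ℕ}, x < y → y < z → B x y ≤ B x z := by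
    intro x y z h1 h2
    have := homT [h x, h y, h z] rfl (pw3 (hmono h1) (hmono h2)) (mem3 H4 hm4 _ _ _)
    rw [hkT] at this
    exact of_decide_eq_true this
  -- derived negative facts
  have L_G : ∀ {i j k : ℕ}, i < j → j < k → ¬ B i j ≤ B j k :=
    fun h1 h2 => hG _ _ _ (hmono h1) (hmono h2)
  have L_P3 : ∀ {x y z w : ℕ}, x < y → y < z → z < w → ¬ B x w ≤ B y z := by
    intro x y z w h1 h2 h3 hle
    exact L_G (show x < w by omega) (show w < w+1 by omega)
      (hle.trans (L_P1 h2 h3 (by omega)))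
  have L_P5 : ∀ {x y z w : ℕ}, x < y → y < z → z < w → ¬ B y w ≤ B x z := by
    intro x y z w h1 h2 h3 hle
    exact L_G (show y < w by omega) (show w < w+1 by omega)
      (hle.trans (L_P1 (show x < z by omega) h3 (by omega)))
  have L_P6 : ∀ {x y z w : ℕ}, x < y → y < z → z < w → ¬ B z w ≤ B x y := by
    intro x y z w h1 h2 h3 hle
    exact L_G h3 (show w < w+1 by omega)
      (hle.trans (L_P1 h1 (show y < w by omega) (by omega)))
  have L_T2 : ∀ {x y z : ℕ}, x < y → y < z → ¬ B x z ≤ B x y := by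
    intro x y z h1 h2 hle
    exact L_G (show x < z by omega) (show z < z+1 by omega)
      (hle.trans (L_P1 h1 h2 (by omega)))
  have L_T4 : ∀ {x y z : ℕ}, x < y → y < z → ¬ B y z ≤ B x y := by
    intro x y z h1 h2 hle
    exact L_G h2 (show z < z+1 by omega)
      (hle.trans (L_P1 h1 h2 (by omega)))
  have L_T5 : ∀ {x y z : ℕ}, x < y → y < z → ¬ B x z ≤ B y z := by
    intro x y z h1 h2 hle
    exact L_P2 h1 h2 (show z < z+1 by omega)
      (hle.trans (L_T1 h2 (by omega)))
  have L_T6 : ∀ {x y z : ℕ}, x < y → y < z → ¬ B y z ≤ B x z := by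
    intro x y z h1 h2 hle
    exact L_P4 h1 h2 (show z < z+1 by omega)
      (hle.trans (L_T1 (show x < z by omega) (by omega)))
  -- the embedding
  refine ⟨fun x => B x.1.1 x.1.2, ?_⟩
  rintro ⟨⟨m, n⟩, hx⟩ ⟨⟨m', n'⟩, hy⟩
  simp only [radoLe] at *
  constructor
  · rintro (⟨rfl, hnn⟩ | hlt)
    · rcases eq_or_lt_of_le hnn with rfl | hlt'
      · exact le_refl _
      · exact L_T1 hx hlt'
    · exact L_P1 hx hlt hy
  · intro hle
    by_contra hneg
    push_neg at hneg
    obtain ⟨h1, h2⟩ := hneg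
    rcases lt_trichotomy m m' with hmm | rfl | hmm
    · rcases lt_or_eq_of_le h2 with hm'n | rfl
      · rcases lt_trichotomy n' n with hn | rfl | hn
        · exact L_P3 hmm hy hn hle
        · exact L_T5 hmm hm'n hle
        · exact L_P2 hmm hm'n hn hle
      · exact L_G hx hy hle
    · exact L_T2 hy (h1 rfl) hle
    · rcases lt_trichotomy n' m with hn | rfl | hn
      · exact L_P6 hy hn hx hle
      · exact L_T4 hmm hx hle
      · rcases lt_trichotomy n' n with hn2 | rfl | hn2
        · exact L_P5 hmm hn hn2 hle
        · exact L_T6 hmm hx hle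
        · exact L_P4 hmm hx hn2 hle
end

section
/- (Nash-Williams) Let F be a front on an infinite X ⊆ ℕ. For any subset S ⊆ F there exists an infinite Y ⊆ X such that the sub-front F|Y = {s ∈ F : s ⊆ Y} satisfies either F|Y ⊆ S or F|Y ∩ S = ∅. -/
/-- `u` is an initial segment of `v ⊆ ℕ`. -/
def IsInitSeg (u v : Set ℕ) : Prop :=
  u = v ∨ ∃ n ∈ v, u = {k ∈ v | k < n}

/-- `F` is a front on the infinite set `X ⊆ ℕ`. -/
def IsFront (F : Set (Set ℕ)) (X : Set ℕ) : Prop :=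
  (∀ s ∈ F, s.Finite ∧ s ⊆ X) ∧
  (F = {∅} ∨ ⋃₀ F = X) ∧
  (∀ s ∈ F, ∀ t ∈ F, IsInitSeg s t → s = t) ∧
  (∀ Y ⊆ X, Y.Infinite → ∃ s ∈ F, IsInitSeg s Y)

namespace NW

def Above (s Z : Set ℕ) : Prop := ∀ a ∈ s, ∀ z ∈ Z, a < z

def Accepts (S : Set (Set ℕ)) (Y s : Set ℕ) : Prop :=
  ∀ Z, Z ⊆ Y → Z.Infinite → Above s Z → ∃ u ∈ S, IsInitSeg u (s ∪ Z)

def Rejects (S : Set (Set ℕ)) (Y s : Set ℕ) : Prop :=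
  ∀ Z, Z ⊆ Y → Z.Infinite → ¬ Accepts S Z s

lemma Accepts.mono {S : Set (Set ℕ)} {Y Z s : Set ℕ} (h : Accepts S Y s) (hZY : Z ⊆ Y) :
    Accepts S Z s := fun W hW => h W (hW.trans hZY)

lemma Rejects.mono {S : Set (Set ℕ)} {Y Z s : Set ℕ} (h : Rejects S Y s) (hZY : Z ⊆ Y) :
    Rejects S Z s := fun W hW => h W (hW.trans hZY)

lemma tail_infinite {Y s : Set ℕ} (hY : Y.Infinite) (hs : s.Finite) :
    {z ∈ Y | ∀ a ∈ s, a < z}.Infinite := by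
  have hD : (⋃ a ∈ s, Set.Iic a).Finite := hs.biUnion fun a _ => Set.finite_Iic a
  refine (hY.diff hD).mono ?_
  rintro z ⟨hzY, hzD⟩
  refine ⟨hzY, fun a ha => ?_⟩
  by_contra h
  exact hzD (Set.mem_biUnion ha (Set.mem_Iic.2 (by omega)))

lemma Rejects.of_above_subset {S : Set (Set ℕ)} {Z W s : Set ℕ} (hs : s.Finite)
    (h : Rejects S Z s) (hsub : ∀ x ∈ W, (∀ a ∈ s, a < x) → x ∈ Z) : Rejects S W s := by
  intro V hVW hV hacc
  have hV' : ({x ∈ V | ∀ a ∈ s, a < x}).Infinite := tail_infinite hV hs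
  exact h _ (fun x hx => hsub x (hVW hx.1) hx.2) hV' (hacc.mono (fun x hx => hx.1))

lemma accepts_of_mem {S : Set (Set ℕ)} {Y s : Set ℕ} (hs : s ∈ S) : Accepts S Y s := by
  intro Z _ hZ hab
  have hn : sInf Z ∈ Z := Nat.sInf_mem hZ.nonempty
  refine ⟨s, hs, Or.inr ⟨sInf Z, Or.inr hn, ?_⟩⟩
  ext k
  simp only [Set.mem_setOf_eq, Set.mem_union]
  constructor
  · intro hk
    exact ⟨Or.inl hk, hab k hk _ hn⟩
  · rintro ⟨hk | hk, hlt⟩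
    · exact hk
    · exact absurd (Nat.sInf_le hk) (by omega)

lemma exists_decides (S : Set (Set ℕ)) (Y t : Set ℕ) (hY : Y.Infinite) :
    ∃ Z, Z ⊆ Y ∧ Z.Infinite ∧ (Accepts S Z t ∨ Rejects S Z t) := by
  by_cases h : ∃ Z, Z ⊆ Y ∧ Z.Infinite ∧ Accepts S Z t
  · obtain ⟨Z, h1, h2, h3⟩ := h; exact ⟨Z, h1, h2, Or.inl h3⟩
  · push_neg at h
    exact ⟨Y, subset_rfl, hY, Or.inr (fun Z hZ hZi => h Z hZ hZi)⟩

lemma iterate_exists {α : Type*} (P : α → Prop) (Q : α → α → Prop)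
    (h : ∀ a, P a → ∃ b, P b ∧ Q a b) (a0 : α) (h0 : P a0) :
    ∃ f : ℕ → α, f 0 = a0 ∧ (∀ n, P (f n)) ∧ ∀ n, Q (f n) (f (n + 1)) := by
  choose g hg1 hg2 using h
  let F : ℕ → {a : α // P a} := fun n =>
    Nat.rec ⟨a0, h0⟩ (fun _ p => ⟨g p.1 p.2, hg1 p.1 p.2⟩) n
  exact ⟨fun n => (F n).1, rfl, fun n => (F n).2, fun n => hg2 (F n).1 (F n).2⟩

end NW

namespace NW

lemma claimA {S : Set (Set ℕ)} {Y s : Set ℕ} (hY : Y.Infinite) (hs : s.Finite)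
    (hrej : Rejects S Y s) :
    ∃ Z, Z ⊆ Y ∧ Z.Infinite ∧ ∀ z ∈ Z, Rejects S Z (s ∪ {z}) := by
  classical
  set T : Set ℕ := {z ∈ Y | ∀ a ∈ s, a < z} with hTdef
  have hT : T.Infinite := tail_infinite hY hs
  have hTY : T ⊆ Y := fun x hx => hx.1
  -- build the fusion sequence
  have hstep : ∀ p : ℕ × Set ℕ, (p.2 ⊆ T ∧ p.2.Infinite) →
      ∃ q : ℕ × Set ℕ, (q.2 ⊆ T ∧ q.2.Infinite) ∧
        (q.1 ∈ p.2 ∧ q.2 ⊆ p.2 ∧ (∀ z ∈ q.2, q.1 < z) ∧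
          (Accepts S q.2 (s ∪ {q.1}) ∨ Rejects S q.2 (s ∪ {q.1}))) := by
    rintro ⟨m, Z⟩ ⟨hZT, hZinf⟩
    set y := sInf Z with hy
    have hyZ : y ∈ Z := Nat.sInf_mem hZinf.nonempty
    have hRinf : (Z \ Set.Iic y).Infinite := hZinf.diff (Set.finite_Iic y)
    obtain ⟨Z', hZ'R, hZ'inf, hdec⟩ := exists_decides S (Z \ Set.Iic y) (s ∪ {y}) hRinf
    refine ⟨(y, Z'), ⟨fun x hx => hZT (hZ'R hx).1, hZ'inf⟩,
      hyZ, fun x hx => (hZ'R hx).1, fun z hz => ?_, hdec⟩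
    have := (hZ'R hz).2
    simp only [Set.mem_Iic, not_le] at this
    exact this
  obtain ⟨f, hf0, hfP, hfQ⟩ := iterate_exists _ _ hstep (0, T) ⟨subset_rfl, hT⟩
  set g : ℕ → ℕ := fun n => (f (n + 1)).1 with hg
  have hchain : ∀ n, (f (n + 1)).2 ⊆ (f n).2 := fun n => (hfQ n).2.1
  have hmono : ∀ k l, k ≤ l → (f l).2 ⊆ (f k).2 := by
    intro k l hkl
    induction hkl with
    | refl => exact subset_rfl
    | step h ih => exact (hchain _).trans ih
  have hmem : ∀ n, g n ∈ (f n).2 := fun n => (hfQ n).1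
  have hlt : ∀ n, ∀ z ∈ (f (n + 1)).2, g n < z := fun n => (hfQ n).2.2.1
  have hgT : ∀ n, g n ∈ T := fun n => (hfP n).1 (hmem n)
  have hstrict : StrictMono g := by
    intro n k hnk
    exact hlt n (g k) (hmono (n + 1) k hnk (hmem k))
  have hdec : ∀ n, Accepts S (f (n + 1)).2 (s ∪ {g n}) ∨ Rejects S (f (n + 1)).2 (s ∪ {g n}) :=
    fun n => (hfQ n).2.2.2
  set Aacc : Set ℕ := {n | Accepts S (f (n + 1)).2 (s ∪ {g n})} with hAdef
  -- Aacc must be finite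
  have hAfin : Aacc.Finite := by
    by_contra hAinf
    have hAinf : Aacc.Infinite := hAinf
    set B : Set ℕ := g '' Aacc with hBdef
    have hBY : B ⊆ Y := by rintro x ⟨n, _, rfl⟩; exact hTY (hgT n)
    have hBinf : B.Infinite := hAinf.image (hstrict.injective.injOn)
    refine hrej B hBY hBinf ?_
    intro W hWB hWinf _
    set y := sInf W with hydef
    have hyW : y ∈ W := Nat.sInf_mem hWinf.nonempty
    obtain ⟨n, hnA, hgny⟩ := hWB hyW
    set W' : Set ℕ := W \ {y} with hW'def
    have hW'inf : W'.Infinite := hWinf.diff (Set.finite_singleton y)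
    have hW'sub : W' ⊆ (f (n + 1)).2 := by
      rintro w ⟨hwW, hwy⟩
      obtain ⟨k, _, hgkw⟩ := hWB hwW
      have hylt : y < w := by
        have := Nat.sInf_le hwW
        simp only [Set.mem_singleton_iff] at hwy
        omega
      have hnk : n < k := by
        by_contra hc
        push_neg at hc
        have := hstrict.le_iff_le.2 hc
        omega
      exact hmono (n + 1) k hnk (hgkw ▸ hmem k)
    have hab : Above (s ∪ {y}) W' := by
      rintro a (ha | ha) w hw
      · have hwT : w ∈ T := by
          obtain ⟨k, _, hgkw⟩ := hWB hw.1
          exact hgkw ▸ hgT k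
        exact hwT.2 a ha
      · simp only [Set.mem_singleton_iff] at ha
        subst ha
        have := Nat.sInf_le hw.1
        have hne := hw.2
        simp only [Set.mem_singleton_iff] at hne
        omega
    obtain ⟨u, huS, hu⟩ := (hgny ▸ hnA : Accepts S (f (n + 1)).2 (s ∪ {y})) W' hW'sub hW'inf hab
    refine ⟨u, huS, ?_⟩
    have : (s ∪ {y}) ∪ W' = s ∪ W := by
      rw [Set.union_assoc, Set.union_diff_cancel (Set.singleton_subset_iff.2 hyW)]
    rwa [this] at hu
  -- take the tail beyond Aacc
  obtain ⟨N, hN⟩ : ∃ N, ∀ n ∈ Aacc, n < N := by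
    rcases Aacc.eq_empty_or_nonempty with h | h
    · exact ⟨0, by simp [h]⟩
    · obtain ⟨N, hN⟩ := hAfin.bddAbove
      exact ⟨N + 1, fun n hn => by have := hN hn; omega⟩
  refine ⟨g '' Set.Ici N, ?_, ?_, ?_⟩
  · rintro x ⟨n, _, rfl⟩; exact hTY (hgT n)
  · exact (Set.Ici_infinite N).image (hstrict.injective.injOn)
  · rintro z ⟨n, hnN, rfl⟩
    have hnrej : Rejects S (f (n + 1)).2 (s ∪ {g n}) := by
      rcases hdec n with h | h
      · exact absurd (hN n h) (by simp only [Set.mem_Ici] at hnN; omega)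
      · exact h
    refine hnrej.of_above_subset (hs.union (Set.finite_singleton _)) ?_
    rintro x ⟨k, _, rfl⟩ habx
    have h1 : g n < g k := habx (g n) (Or.inr rfl)
    exact hmono (n + 1) k (hstrict.lt_iff_lt.1 h1) (hmem k)

end NW

namespace NW

lemma iterA (S : Set (Set ℕ)) (L : Finset (Finset ℕ)) :
    ∀ Y : Set ℕ, Y.Infinite → (∀ t ∈ L, Rejects S Y (↑t : Set ℕ)) →
      ∃ Z, Z ⊆ Y ∧ Z.Infinite ∧ ∀ t ∈ L, ∀ z ∈ Z, Rejects S Z ((↑t : Set ℕ) ∪ {z}) := by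
  classical
  induction L using Finset.induction with
  | empty => exact fun Y hY _ => ⟨Y, subset_rfl, hY, by simp⟩
  | insert t L hnotmem ih =>
    intro Y hY h
    obtain ⟨Z1, hZ1Y, hZ1inf, hZ1⟩ :=
      claimA hY t.finite_toSet (h t (Finset.mem_insert_self t L))
    obtain ⟨Z2, hZ2Z1, hZ2inf, hZ2⟩ := ih Z1 hZ1inf
      (fun t' ht' => (h t' (Finset.mem_insert_of_mem ht')).mono hZ1Y)
    refine ⟨Z2, hZ2Z1.trans hZ1Y, hZ2inf, ?_⟩
    intro t' ht' z hz
    rcases Finset.mem_insert.1 ht' with rfl | ht'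
    · exact (hZ1 z (hZ2Z1 hz)).mono hZ2Z1
    · exact hZ2 t' ht' z hz

lemma exists_all_reject (S : Set (Set ℕ)) (X0 : Set ℕ) (hX : X0.Infinite)
    (h0 : Rejects S X0 ∅) :
    ∃ Y, Y ⊆ X0 ∧ Y.Infinite ∧ ∀ s : Set ℕ, s.Finite → s ⊆ Y → Rejects S Y s := by
  classical
  set P : Finset ℕ × Set ℕ → Prop := fun p =>
    p.2 ⊆ X0 ∧ p.2.Infinite ∧ (∀ a ∈ p.1, ∀ z ∈ p.2, a < z) ∧
      ∀ t ∈ p.1.powerset, Rejects S p.2 (↑t : Set ℕ) with hPdef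
  set Q : Finset ℕ × Set ℕ → Finset ℕ × Set ℕ → Prop := fun p q =>
    ∃ y ∈ p.2, q.1 = insert y p.1 ∧ q.2 ⊆ p.2 with hQdef
  have hstep : ∀ p, P p → ∃ q, P q ∧ Q p q := by
    rintro ⟨G, Y⟩ ⟨hYX, hYinf, habove, hrej⟩
    obtain ⟨Z, hZY, hZinf, hZ⟩ := iterA S G.powerset Y hYinf hrej
    set y := sInf Z with hydef
    have hyZ : y ∈ Z := Nat.sInf_mem hZinf.nonempty
    set Y' : Set ℕ := {x ∈ Z | y < x} with hY'def
    have hY'inf : Y'.Infinite := by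
      refine (hZinf.diff (Set.finite_Iic y)).mono ?_
      rintro x ⟨hx1, hx2⟩
      simp only [Set.mem_Iic, not_le] at hx2
      exact ⟨hx1, hx2⟩
    have hY'Z : Y' ⊆ Z := fun x hx => hx.1
    refine ⟨(insert y G, Y'), ⟨(hY'Z.trans hZY).trans hYX, hY'inf, ?_, ?_⟩,
      y, hZY hyZ, rfl, hY'Z.trans hZY⟩
    · intro a ha z hz
      rcases Finset.mem_insert.1 ha with rfl | ha
      · exact hz.2
      · exact habove a ha z (hZY (hY'Z hz))
    · intro t ht
      rw [Finset.mem_powerset] at ht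
      by_cases hyt : y ∈ t
      · have hsub : t.erase y ∈ G.powerset := by
          rw [Finset.mem_powerset]
          intro x hx
          rcases Finset.mem_insert.1 (ht (Finset.mem_of_mem_erase hx)) with rfl | h
          · exact absurd rfl (Finset.ne_of_mem_erase hx)
          · exact h
        have hcoe : (↑t : Set ℕ) = (↑(t.erase y) : Set ℕ) ∪ {y} := by
          ext k
          simp only [Finset.coe_erase, Set.mem_union, Set.mem_diff, Finset.mem_coe,
            Set.mem_singleton_iff]
          constructor
          · intro hk
            by_cases hky : k = y
            · exact Or.inr hky
            · exact Or.inl ⟨hk, hky⟩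
          · rintro (⟨hk, _⟩ | rfl)
            · exact hk
            · exact hyt
        rw [hcoe]
        exact (hZ (t.erase y) hsub y hyZ).mono hY'Z
      · have hsub : t ∈ G.powerset := by
          rw [Finset.mem_powerset]
          intro x hx
          rcases Finset.mem_insert.1 (ht hx) with rfl | h
          · exact absurd hx hyt
          · exact h
        exact (hrej t hsub).mono (hY'Z.trans hZY)
  have hP0 : P (∅, X0) := by
    refine ⟨subset_rfl, hX, by simp, ?_⟩
    intro t ht
    simp only [Finset.powerset_empty, Finset.mem_singleton] at ht
    subst ht
    simpa using h0
  obtain ⟨f, hf0, hfP, hfQ⟩ := iterate_exists P Q hstep (∅, X0) hP0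
  choose y hy1 hy2 hy3 using hfQ
  have hYmono : ∀ k l, k ≤ l → (f l).2 ⊆ (f k).2 := by
    intro k l hkl
    induction hkl with
    | refl => exact subset_rfl
    | step h ih => exact (hy3 _).trans ih
  have hyin : ∀ n, y n ∈ (f n).2 := hy1
  have hFn : ∀ n, (f n).1 = Finset.image y (Finset.range n) := by
    intro n
    induction n with
    | zero => rw [hf0]; simp
    | succ n ih => rw [hy2 n, ih, Finset.range_add_one, Finset.image_insert]
  have hstrict : StrictMono y := by
    apply strictMono_nat_of_lt_succ
    intro n
    have h1 : y n ∈ (f (n + 1)).1 := by rw [hy2 n]; exact Finset.mem_insert_self _ _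
    exact (hfP (n + 1)).2.2.1 (y n) h1 (y (n + 1)) (hyin (n + 1))
  set Yomega : Set ℕ := Set.range y with hYinfdef
  have hYX0 : Yomega ⊆ X0 := by
    rintro x ⟨n, rfl⟩
    exact (hfP n).1 (hyin n)
  have hYinf : Yomega.Infinite := Set.infinite_range_of_injective hstrict.injective
  refine ⟨Yomega, hYX0, hYinf, ?_⟩
  intro s hs hsY
  rcases s.eq_empty_or_nonempty with rfl | hsne
  · exact h0.mono hYX0
  · obtain ⟨M, hMs, hMmax⟩ : ∃ M ∈ s, ∀ a ∈ s, a ≤ M := by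
      obtain ⟨M, hM⟩ := hs.bddAbove
      have : ∃ m ∈ hs.toFinset, ∀ a ∈ hs.toFinset, a ≤ m := by
        obtain ⟨m, hm1, hm2⟩ := hs.toFinset.exists_max_image id (by simpa using hsne)
        exact ⟨m, hm1, hm2⟩
      obtain ⟨m, hm1, hm2⟩ := this
      exact ⟨m, hs.mem_toFinset.1 hm1, fun a ha => hm2 a (hs.mem_toFinset.2 ha)⟩
    obtain ⟨j, hj⟩ := hsY hMs
    have hsF : hs.toFinset ∈ (f (j + 1)).1.powerset := by
      rw [Finset.mem_powerset, hFn]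
      intro x hx
      have hxs : x ∈ s := hs.mem_toFinset.1 hx
      obtain ⟨k, rfl⟩ := hsY hxs
      have hkj : k ≤ j := hstrict.le_iff_le.1 (hj ▸ hMmax _ hxs)
      exact Finset.mem_image.2 ⟨k, Finset.mem_range.2 (by omega), rfl⟩
    have hrejs : Rejects S (f (j + 1)).2 s := by
      have := (hfP (j + 1)).2.2.2 hs.toFinset hsF
      rwa [hs.coe_toFinset] at this
    refine hrejs.of_above_subset hs ?_
    rintro x ⟨k, rfl⟩ habx
    have h1 : y j < y k := hj ▸ habx M hMs
    exact hYmono (j + 1) k (hstrict.lt_iff_lt.1 h1) (hyin k)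

end NW

namespace NW

lemma initseg_comparable {u v Z : Set ℕ} (hu : IsInitSeg u Z) (hv : IsInitSeg v Z) :
    IsInitSeg u v ∨ IsInitSeg v u := by
  rcases hu with rfl | ⟨n, hn, rfl⟩
  · exact Or.inr hv
  rcases hv with rfl | ⟨m, hm, rfl⟩
  · exact Or.inl (Or.inr ⟨n, hn, rfl⟩)
  rcases lt_trichotomy n m with h | rfl | h
  · refine Or.inl (Or.inr ⟨n, ⟨hn, h⟩, ?_⟩)
    ext k
    constructor
    · rintro ⟨h1, h2⟩
      exact ⟨⟨h1, h2.trans h⟩, h2⟩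
    · rintro ⟨⟨h1, _⟩, h2⟩
      exact ⟨h1, h2⟩
  · exact Or.inl (Or.inl rfl)
  · refine Or.inr (Or.inr ⟨m, ⟨hm, h⟩, ?_⟩)
    ext k
    constructor
    · rintro ⟨h1, h2⟩
      exact ⟨⟨h1, h2.trans h⟩, h2⟩
    · rintro ⟨⟨h1, _⟩, h2⟩
      exact ⟨h1, h2⟩

lemma initseg_union_tail {s Z : Set ℕ} (hT : ({z ∈ Z | ∀ a ∈ s, a < z} : Set ℕ).Nonempty) :
    IsInitSeg s (s ∪ {z ∈ Z | ∀ a ∈ s, a < z}) := by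
  set T : Set ℕ := {z ∈ Z | ∀ a ∈ s, a < z} with hTdef
  set n := sInf T with hn
  have hnT : n ∈ T := Nat.sInf_mem hT
  refine Or.inr ⟨n, Or.inr hnT, ?_⟩
  ext k
  constructor
  · intro hk
    exact ⟨Or.inl hk, hnT.2 k hk⟩
  · rintro ⟨hk | hk, hlt⟩
    · exact hk
    · exact absurd (Nat.sInf_le hk) (by omega)

end NW

/-- Nash-Williams' theorem: every partition of a front contains a sub-front
inside one of the pieces. -/
theorem stmt_17 (F : Set (Set ℕ)) (X : Set ℕ) (hX : X.Infinite) (hF : IsFront F X)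
    (S : Set (Set ℕ)) (hS : S ⊆ F) :
    ∃ Y ⊆ X, Y.Infinite ∧
      ({s ∈ F | s ⊆ Y} ⊆ S ∨ {s ∈ F | s ⊆ Y} ∩ S = ∅) := by

  classical
  obtain ⟨hFfin, -, hthin, -⟩ := hF
  by_cases h : ∃ Z, Z ⊆ X ∧ Z.Infinite ∧ NW.Accepts S Z ∅
  · -- positive branch: F|Z ⊆ S
    obtain ⟨Z, hZX, hZinf, hacc⟩ := h
    refine ⟨Z, hZX, hZinf, Or.inl ?_⟩
    rintro s ⟨hsF, hsZ⟩
    have hsfin : s.Finite := (hFfin s hsF).1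
    set T : Set ℕ := {z ∈ Z | ∀ a ∈ s, a < z} with hTdef
    have hTinf : T.Infinite := NW.tail_infinite hZinf hsfin
    set W : Set ℕ := s ∪ T with hWdef
    have hWZ : W ⊆ Z := by
      rintro x (hx | hx)
      · exact hsZ hx
      · exact hx.1
    have hWinf : W.Infinite := hTinf.mono Set.subset_union_right
    obtain ⟨u, huS, hu⟩ := hacc W hWZ hWinf (fun a ha => absurd ha (Set.notMem_empty a))
    rw [Set.empty_union] at hu
    have hsW : IsInitSeg s W := NW.initseg_union_tail hTinf.nonempty
    rcases NW.initseg_comparable hsW hu with h' | h'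
    · rw [hthin s hsF u (hS huS) h']
      exact huS
    · rw [← hthin u (hS huS) s hsF h']
      exact huS
  · -- negative branch: X rejects ∅
    push_neg at h
    have h0 : NW.Rejects S X ∅ := fun Z hZ hZi => h Z hZ hZi
    obtain ⟨Y, hYX, hYinf, hrej⟩ := NW.exists_all_reject S X hX h0
    refine ⟨Y, hYX, hYinf, Or.inr ?_⟩
    rw [Set.eq_empty_iff_forall_notMem]
    rintro t ⟨⟨htF, htY⟩, htS⟩
    exact hrej t (hFfin t htF).1 htY Y subset_rfl hYinf (NW.accepts_of_mem htS)
end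

section
/- Every well-order is a better-quasi-order: if Q is a linear order with no infinite strictly descending sequence, then every multi-sequence h from the infinite subsets of ℕ to Q is good, i.e. there exists an infinite N ⊆ ℕ with h(N) ≤ h(N \ {min N}). -/
/-- Every well-order is a better-quasi-order: every multi-sequence into a
well-founded linear order is good. -/
theorem stmt_18 (Q : Type*) [LinearOrder Q]
    (hwf : ¬ ∃ f : ℕ → Q, ∀ n : ℕ, f (n+1) < f n)
    (h : Set ℕ → Q) :
    ∃ N : Set ℕ, N.Infinite ∧ h N ≤ h (N \ {sInf N}) := by
  by_contra hc
  push_neg at hc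
  -- build descending chain
  let g : ℕ → Set ℕ := fun n => Nat.rec Set.univ (fun _ s => s \ {sInf s}) n
  have hg : ∀ n, (g n).Infinite := by
    intro n
    induction n with
    | zero => exact Set.infinite_univ
    | succ n ih => exact ih.diff (Set.finite_singleton _)
  apply hwf
  exact ⟨fun n => h (g n), fun n => hc (g n) (hg n)⟩
end

section
/- For every g : ℕ → ℕ strictly increasing (injective and increasing) with g ≠ id, there exists a continuous map σ from the space E of strictly increasing functions ℕ → ℕ (with the topology inherited from the Baire space ℕ^ℕ) to itself such that σ(f ∘ s) = σ(f) ∘ g for all f ∈ E, where s(n) = n+1 is the successor function. -/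
namespace Stmt19

variable (g : ℕ → ℕ) (a : ℕ)

/-- `n` is in the image of `g` restricted to `[a, ∞)`. -/
def Im (n : ℕ) : Prop := ∃ t, a ≤ t ∧ g t = n

/-- The non-top elements of the block of `t`. -/
def Ch (t : ℕ) : Finset ℕ :=
  if t = a then Finset.Ico a (g a) else Finset.Ioo (g (t - 1)) (g t)

/-- The main weight function. -/
def V (x m : ℕ) : ℕ :=
  ∑ j ∈ (Finset.range x).attach,
    ((Ch g a (g^[j.1] m)).card + ∑ m' ∈ Ch g a (g^[j.1] m), V (x - 1 - j.1) m')
termination_by x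
decreasing_by
  have := Finset.mem_range.mp j.2
  omega

lemma V_def (x m : ℕ) : V g a x m =
    ∑ j ∈ Finset.range x,
      ((Ch g a (g^[j] m)).card + ∑ m' ∈ Ch g a (g^[j] m), V g a (x - 1 - j) m') := by
  rw [V]
  exact Finset.sum_attach (Finset.range x) (fun j => (Ch g a (g^[j] m)).card + ∑ m' ∈ Ch g a (g^[j] m), V g a (x - 1 - j) m')

/-- The correction sum. -/
def D (f : ℕ → ℕ) (k m : ℕ) : ℕ :=
  ∑ j ∈ Finset.range k,
    ((Ch g a (g^[j] m)).card + ∑ m' ∈ Ch g a (g^[j] m), V g a (f (k - 1 - j)) m')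

lemma V_id (x m : ℕ) : V g a x m = D g a id x m := by
  rw [V_def, D]; rfl

lemma V_mono : ∀ y x m, x ≤ y → V g a x m ≤ V g a y m := by
  intro y
  induction y using Nat.strong_induction_on with
  | _ y ih =>
    intro x m hxy
    rw [V_def, V_def]
    refine le_trans (Finset.sum_le_sum ?_)
      (Finset.sum_le_sum_of_subset (Finset.range_subset_range.mpr hxy))
    intro j hj
    have hj' := Finset.mem_range.mp hj
    refine Nat.add_le_add_left (Finset.sum_le_sum fun m' _ => ?_) _
    exact ih (y - 1 - j) (by omega) _ _ (by omega)

lemma smono_add {f : ℕ → ℕ} (hf : StrictMono f) (u d : ℕ) : f u + d ≤ f (u + d) := by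
  induction d with
  | zero => simp
  | succ d ihd =>
    have h1 : f (u + d) < f (u + d + 1) := hf (by omega)
    have h2 : u + (d + 1) = u + d + 1 := rfl
    rw [h2]
    omega

lemma key {f : ℕ → ℕ} (hf : StrictMono f) (k m : ℕ) : D g a f k m ≤ V g a (f k) m := by
  have hk : k ≤ f k := by have := smono_add hf 0 k; simp at this; omega
  rw [V_def, D]
  refine le_trans (Finset.sum_le_sum ?_)
    (Finset.sum_le_sum_of_subset (Finset.range_subset_range.mpr hk))
  intro j hj
  have hj' := Finset.mem_range.mp hj
  refine Nat.add_le_add_left (Finset.sum_le_sum fun m' _ => ?_) _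
  apply V_mono
  have := smono_add hf (k - 1 - j) (j + 1)
  have h2 : k - 1 - j + (j + 1) = k := by omega
  rw [h2] at this
  omega


open Classical in
/-- Depth of `n` over the bases. -/
noncomputable def dep (H : ∀ t, a ≤ t → t < g t) (n : ℕ) : ℕ :=
  if h : Im g a n then dep H h.choose + 1 else 0
termination_by n
decreasing_by
  have h1 := h.choose_spec
  have h2 := H _ h1.1
  omega

open Classical in
/-- Base of `n`. -/
noncomputable def bas (H : ∀ t, a ≤ t → t < g t) (n : ℕ) : ℕ :=
  if h : Im g a n then bas H h.choose else n
termination_by n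
decreasing_by
  have h1 := h.choose_spec
  have h2 := H _ h1.1
  omega

lemma dep_not_im (H : ∀ t, a ≤ t → t < g t) {n : ℕ} (h : ¬ Im g a n) :
    dep g a H n = 0 ∧ bas g a H n = n := by
  rw [dep, bas]
  simp [h]

lemma dep_g (hinj : Function.Injective g) (H : ∀ t, a ≤ t → t < g t) {t : ℕ} (ht : a ≤ t) :
    dep g a H (g t) = dep g a H t + 1 ∧ bas g a H (g t) = bas g a H t := by
  have h : Im g a (g t) := ⟨t, ht, rfl⟩
  have hc : h.choose = t := hinj h.choose_spec.2
  constructor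
  · rw [dep, dif_pos h, hc]
  · rw [bas, dif_pos h, hc]

lemma bas_spec (H : ∀ t, a ≤ t → t < g t) :
    ∀ n, a ≤ n → a ≤ bas g a H n ∧ ¬ Im g a (bas g a H n) ∧ g^[dep g a H n] (bas g a H n) = n := by
  intro n
  induction n using Nat.strong_induction_on with
  | _ n ih =>
    intro hn
    by_cases h : Im g a n
    · have h1 := h.choose_spec
      have h2 := H _ h1.1
      have hlt : h.choose < n := by omega
      have := ih h.choose hlt h1.1
      rw [dep, dif_pos h, bas, dif_pos h]
      refine ⟨this.1, this.2.1, ?_⟩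
      rw [Function.iterate_succ_apply', this.2.2, h1.2]
    · have := dep_not_im g a H h
      rw [this.1, this.2]
      exact ⟨hn, h, rfl⟩

lemma mem_Ch (hg : StrictMono g) (hle : ∀ m, m ≤ g m) (H : ∀ t, a ≤ t → t < g t)
    {t : ℕ} (ht : a ≤ t) {m' : ℕ} (hm : m' ∈ Ch g a t) : a ≤ m' ∧ ¬ Im g a m' := by
  unfold Ch at hm
  by_cases hta : t = a
  · subst hta
    rw [if_pos rfl, Finset.mem_Ico] at hm
    refine ⟨hm.1, ?_⟩
    rintro ⟨u, hu, hgu⟩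
    have : g t ≤ g u := hg.monotone hu
    omega
  · rw [if_neg hta, Finset.mem_Ioo] at hm
    have h1 : a ≤ t - 1 := by omega
    have h2 : t - 1 ≤ g (t - 1) := hle _
    refine ⟨by omega, ?_⟩
    rintro ⟨u, hu, hgu⟩
    have h3 : t - 1 < u := hg.lt_iff_lt.mp (by omega)
    have h4 : u < t := hg.lt_iff_lt.mp (by omega)
    omega


/-- The incremental weight. -/
noncomputable def v (H : ∀ t, a ≤ t → t < g t) (f : ℕ → ℕ) (n : ℕ) : ℕ :=
  if n < a then 0
  else V g a (f (dep g a H n)) (bas g a H n) - D g a f (dep g a H n) (bas g a H n)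

lemma v_base (H : ∀ t, a ≤ t → t < g t) (f : ℕ → ℕ) {m : ℕ} (hm : a ≤ m)
    (him : ¬ Im g a m) : v g a H f m = V g a (f 0) m := by
  have h := dep_not_im g a H him
  rw [v, if_neg (by omega), h.1, h.2]
  simp [D]

lemma blockEq (hg : StrictMono g) (hle : ∀ m, m ≤ g m) (H : ∀ t, a ≤ t → t < g t)
    {f : ℕ → ℕ} (hf : StrictMono f) {t : ℕ} (ht : a ≤ t) :
    v g a H (fun n => f (n + 1)) t =
      (Ch g a t).card + (∑ m' ∈ Ch g a t, v g a H f m') + v g a H f (g t) := by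
  obtain ⟨hbm, hbI, hit⟩ := bas_spec g a H t ht
  set k := dep g a H t with hk
  set m := bas g a H t with hm
  have himg := dep_g g a hg.injective H ht
  have hgt : a ≤ g t := le_trans ht (hle t)
  have hfs : StrictMono (fun n => f (n + 1)) := hf.comp fun _ _ h => Nat.add_lt_add_right h 1
  have hvt : v g a H (fun n => f (n + 1)) t = V g a (f (k + 1)) m - D g a (fun n => f (n + 1)) k m := by
    rw [v, if_neg (by omega)]
  have hvg : v g a H f (g t) = V g a (f (k + 1)) m - D g a f (k + 1) m := by
    rw [v, if_neg (by omega), himg.1, himg.2]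
  have hDsplit : D g a f (k + 1) m =
      D g a (fun n => f (n + 1)) k m + ((Ch g a t).card + ∑ m' ∈ Ch g a t, V g a (f 0) m') := by
    unfold D
    rw [Finset.sum_range_succ]
    congr 1
    · refine Finset.sum_congr rfl fun j hj => ?_
      have hj' := Finset.mem_range.mp hj
      have h1 : k + 1 - 1 - j = (k - 1 - j) + 1 := by omega
      rw [h1]
    · rw [hit]
      have h2 : k + 1 - 1 - k = 0 := by omega
      rw [h2]
  have hchv : ∑ m' ∈ Ch g a t, v g a H f m' = ∑ m' ∈ Ch g a t, V g a (f 0) m' := by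
    refine Finset.sum_congr rfl fun m' hm' => ?_
    obtain ⟨h1, h2⟩ := mem_Ch g a hg hle H ht hm'
    exact v_base g a H f h1 h2
  have k1 : D g a f (k + 1) m ≤ V g a (f (k + 1)) m := key g a hf (k + 1) m
  have k2 : D g a (fun n => f (n + 1)) k m ≤ V g a (f (k + 1)) m := key g a hfs k m
  rw [hvt, hvg, hchv]
  omega


lemma v_zero (H : ∀ t, a ≤ t → t < g t) (f : ℕ → ℕ) {x : ℕ} (hx : x < a) :
    v g a H f x = 0 := by rw [v, if_pos hx]

lemma baseEq (hg : StrictMono g) (hle : ∀ m, m ≤ g m) (H : ∀ t, a ≤ t → t < g t)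
    {f : ℕ → ℕ} (hf : StrictMono f) :
    g a + ∑ x ∈ Finset.range (g a + 1), v g a H f x =
      a + ∑ x ∈ Finset.range (a + 1), v g a H (fun n => f (n + 1)) x := by
  have haa : a < g a := H a le_rfl
  have hz : ∀ (f' : ℕ → ℕ), ∑ x ∈ Finset.range a, v g a H f' x = 0 :=
    fun f' => Finset.sum_eq_zero fun x hx => v_zero g a H f' (Finset.mem_range.mp hx)
  have S1 : ∑ x ∈ Finset.range (a + 1), v g a H (fun n => f (n + 1)) x
      = v g a H (fun n => f (n + 1)) a := by
    rw [Finset.sum_range_succ, hz, zero_add]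
  have S2 : ∑ x ∈ Finset.range (g a + 1), v g a H f x
      = ∑ x ∈ Finset.range (g a), v g a H f x + v g a H f (g a) := Finset.sum_range_succ _ _
  have S3 : ∑ x ∈ Finset.range (g a), v g a H f x = ∑ x ∈ Finset.Ico a (g a), v g a H f x := by
    rw [Finset.range_eq_Ico, ← Finset.sum_Ico_consecutive _ (Nat.zero_le a) (le_of_lt haa),
      ← Finset.range_eq_Ico, hz, zero_add]
  have S4 : Ch g a a = Finset.Ico a (g a) := by rw [Ch, if_pos rfl]
  have S5 := blockEq g a hg hle H hf (le_refl a)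
  rw [S4, Nat.card_Ico] at S5
  rw [S1, S2, S3, S5]
  omega

lemma mainEq (hg : StrictMono g) (hle : ∀ m, m ≤ g m) (H : ∀ t, a ≤ t → t < g t)
    {f : ℕ → ℕ} (hf : StrictMono f) :
    ∀ n, a ≤ n → g n + ∑ x ∈ Finset.range (g n + 1), v g a H f x =
      n + ∑ x ∈ Finset.range (n + 1), v g a H (fun k => f (k + 1)) x := by
  intro n
  induction n with
  | zero =>
    intro hn
    have h0 : a = 0 := by omega
    subst h0
    exact baseEq g 0 hg hle H hf
  | succ n ihn =>
    intro hn
    rcases Nat.lt_or_ge n a with hna | hna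
    · have h0 : a = n + 1 := by omega
      subst h0
      exact baseEq g (n + 1) hg hle H hf
    · have ih := ihn hna
      have hg1 : g n < g (n + 1) := hg (by omega)
      have hgn : n < g n := H n hna
      have S1 : ∑ x ∈ Finset.range (g (n + 1) + 1), v g a H f x =
          ∑ x ∈ Finset.range (g n + 1), v g a H f x
            + ∑ x ∈ Finset.Ico (g n + 1) (g (n + 1) + 1), v g a H f x := by
        rw [Finset.range_eq_Ico, ← Finset.sum_Ico_consecutive _ (Nat.zero_le (g n + 1)) (by omega),
          ← Finset.range_eq_Ico]
      have S2 : ∑ x ∈ Finset.Ico (g n + 1) (g (n + 1) + 1), v g a H f x =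
          ∑ x ∈ Finset.Ico (g n + 1) (g (n + 1)), v g a H f x + v g a H f (g (n + 1)) :=
        Finset.sum_Ico_succ_top (by omega) _
      have S3 : Finset.Ico (g n + 1) (g (n + 1)) = Ch g a (n + 1) := by
        rw [Ch, if_neg (by omega)]
        ext x
        simp only [Finset.mem_Ico, Finset.mem_Ioo, Nat.add_sub_cancel]
        omega
      have S4 := blockEq g a hg hle H hf (show a ≤ n + 1 by omega)
      rw [S3] at S2
      have hcard : (Ch g a (n + 1)).card = g (n + 1) - g n - 1 := by
        rw [Ch, if_neg (by omega), Nat.card_Ioo, Nat.add_sub_cancel]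
      rw [hcard] at S4
      have S5 : ∑ x ∈ Finset.range (n + 1 + 1), v g a H (fun k => f (k + 1)) x =
          ∑ x ∈ Finset.range (n + 1), v g a H (fun k => f (k + 1)) x
            + v g a H (fun k => f (k + 1)) (n + 1) := Finset.sum_range_succ _ _
      rw [S1, S2, S5]
      omega

end Stmt19

/-- For every strictly increasing `g ≠ id` there is a continuous self-map `σ` of
the space of strictly increasing functions `ℕ → ℕ` with `σ(f ∘ s) = σ(f) ∘ g`. -/
theorem stmt_19 (g : ℕ → ℕ) (hg : StrictMono g) (hne : g ≠ id) :
    ∃ σ : {f : ℕ → ℕ // StrictMono f} → {f : ℕ → ℕ // StrictMono f},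
      Continuous σ ∧
      ∀ f : {f : ℕ → ℕ // StrictMono f},
        (σ ⟨fun n => f.1 (n+1), f.2.comp fun _ _ h => Nat.add_lt_add_right h 1⟩).1
          = (σ f).1 ∘ g := by
  classical
  have hex : ∃ n, g n ≠ n := by
    by_contra h
    push_neg at h
    exact hne (funext h)
  set a := Nat.find hex with ha
  have hafix : ∀ m, m < a → g m = m := fun m hm => not_not.mp (Nat.find_min hex hm)
  have hana : g a ≠ a := Nat.find_spec hex
  have hle : ∀ m, m ≤ g m := by
    intro m
    induction m with
    | zero => exact Nat.zero_le _
    | succ m ihm =>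
      have : g m < g (m + 1) := hg (by omega)
      omega
  have H : ∀ t, a ≤ t → t < g t := by
    intro t ht
    rcases Nat.lt_or_ge t (g t) with h | h
    · exact h
    · exfalso
      have h1 : g t = t := le_antisymm h (hle t)
      have h2 := Stmt19.smono_add hg a (t - a)
      have h3 : a + (t - a) = t := by omega
      rw [h3, h1] at h2
      have h4 : g a = a := le_antisymm (by omega) (hle a)
      exact hana h4
  refine ⟨fun f => ⟨fun n => n + ∑ x ∈ Finset.range (n + 1), Stmt19.v g a H f.1 x, ?_⟩, ?_, ?_⟩
  · -- strict monotonicity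
    apply strictMono_nat_of_lt_succ
    intro n
    rw [Finset.sum_range_succ (n := n + 1)]
    omega
  · -- continuity
    apply Continuous.subtype_mk
    apply continuous_pi
    intro n
    apply Continuous.add continuous_const
    apply continuous_finset_sum
    intro x _
    by_cases hx : x < a
    · simp only [Stmt19.v, if_pos hx]
      exact continuous_const
    · simp only [Stmt19.v, if_neg hx]
      have hev : ∀ i : ℕ, Continuous fun f : {f : ℕ → ℕ // StrictMono f} => f.1 i :=
        fun i => (continuous_apply i).comp continuous_subtype_val
      have hV : Continuous fun f : {f : ℕ → ℕ // StrictMono f} =>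
          Stmt19.V g a (f.1 (Stmt19.dep g a H x)) (Stmt19.bas g a H x) :=
        Continuous.comp (g := fun y : ℕ => Stmt19.V g a y (Stmt19.bas g a H x))
          continuous_of_discreteTopology (hev _)
      have hD : Continuous fun f : {f : ℕ → ℕ // StrictMono f} =>
          Stmt19.D g a f.1 (Stmt19.dep g a H x) (Stmt19.bas g a H x) := by
        unfold Stmt19.D
        apply continuous_finset_sum
        intro j _
        apply Continuous.add continuous_const
        apply continuous_finset_sum
        intro m' _
        exact Continuous.comp (g := fun y : ℕ => Stmt19.V g a y m')
          continuous_of_discreteTopology (hev _)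
      have hsub : Continuous fun p : ℕ × ℕ => p.1 - p.2 := continuous_of_discreteTopology
      exact hsub.comp (hV.prodMk hD)
  · -- the equation
    intro f
    funext n
    simp only [Function.comp_apply]
    rcases Nat.lt_or_ge n a with hn | hn
    · have hgn : g n = n := hafix n hn
      rw [hgn]
      have hz : ∀ (f' : ℕ → ℕ), ∑ x ∈ Finset.range (n + 1), Stmt19.v g a H f' x = 0 :=
        fun f' => Finset.sum_eq_zero fun x hx =>
          Stmt19.v_zero g a H f' (by have := Finset.mem_range.mp hx; omega)
      rw [hz, hz]
    · have := Stmt19.mainEq g a hg hle H f.2 n hn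
      omega
end
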